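/- arXiv:2603.08051 — 2 statements merged into one kernel-verified Lean document; each statement's English description precedes it below -/
import Mathlib

section
/- With notation as in the MMSE setting, min over g ∈ ℂ and w > 0 of (w·e(g) − ln w), where e(g) = (Σᵢ|h·vᵢ|²+σ²)|g|² − 2Re(g·(h·v_k)) + 1, equals 1 − ln(1+γ), where γ = |h·v_k|²/(σ² + Σ_{i≠k}|h·v_i|²). -/
open Finset in
theorem wmmse_scalar_equivalence (L K : ℕ) (h : Fin L → ℂ)
    (v : Fin K → Fin L → ℂ) (k : Fin K) (σ2 : ℝ) (hσ : 0 < σ2)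
    (e : ℂ → ℝ)
    (he : ∀ g, e g = (∑ i, ‖∑ j, h j * v i j‖ ^ 2 + σ2) * ‖g‖ ^ 2
      - 2 * (g * (∑ j, h j * v k j)).re + 1)
    (γ : ℝ)
    (hγ : γ = ‖∑ j, h j * v k j‖ ^ 2 /
      (σ2 + ∑ i ∈ univ.erase k, ‖∑ j, h j * v i j‖ ^ 2)) :
    IsLeast {x : ℝ | ∃ g : ℂ, ∃ w : ℝ, 0 < w ∧ x = w * e g - Real.log w}
      (1 - Real.log (1 + γ)) := by
  set c : ℂ := ∑ j, h j * v k j with hc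
  set D : ℝ := σ2 + ∑ i ∈ univ.erase k, ‖∑ j, h j * v i j‖ ^ 2 with hDdef
  set S : ℝ := ∑ i, ‖∑ j, h j * v i j‖ ^ 2 + σ2 with hSdef
  have hsum : ∑ i, ‖∑ j, h j * v i j‖ ^ 2
      = ‖c‖ ^ 2 + ∑ i ∈ univ.erase k, ‖∑ j, h j * v i j‖ ^ 2 := by
    rw [← Finset.add_sum_erase _ _ (Finset.mem_univ k)]
  have hSD : S = ‖c‖ ^ 2 + D := by rw [hSdef, hDdef, hsum]; ring
  have hD : 0 < D := by
    have h0 : 0 ≤ ∑ i ∈ univ.erase k, ‖∑ j, h j * v i j‖ ^ 2 :=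
      Finset.sum_nonneg fun i _ => sq_nonneg _
    rw [hDdef]; linarith
  have hS : 0 < S := by nlinarith [sq_nonneg (‖c‖)]
  have hSD' : S = (c.re ^ 2 + c.im ^ 2) + D := by
    rw [hSD, Complex.sq_norm, Complex.normSq_apply]; ring
  have key : ∀ g : ℂ, S * e g = Complex.normSq ((S : ℂ) * g - (starRingEnd ℂ) c) + D := by
    intro g
    rw [he g]
    simp only [Complex.sq_norm, Complex.normSq_apply, Complex.sub_re, Complex.sub_im,
      Complex.mul_re, Complex.mul_im, Complex.ofReal_re, Complex.ofReal_im,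
      Complex.conj_re, Complex.conj_im]
    ring_nf
    nlinarith [hSD', sq_nonneg g.re, sq_nonneg g.im]
  have hγ' : 1 + γ = S / D := by
    rw [hγ]
    field_simp
    linarith [hSD]
  constructor
  · -- membership: g = conj c / S, w = S / D
    refine ⟨(starRingEnd ℂ) c / (S : ℂ), S / D, div_pos hS hD, ?_⟩
    have hSne : (S : ℂ) ≠ 0 := by exact_mod_cast hS.ne'
    have hzero : (S : ℂ) * ((starRingEnd ℂ) c / (S : ℂ)) - (starRingEnd ℂ) c = 0 := by
      field_simp
      simp
    have he0 : S * e ((starRingEnd ℂ) c / (S : ℂ)) = D := by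
      rw [key, hzero]; simp
    have heval : e ((starRingEnd ℂ) c / (S : ℂ)) = D / S := by
      rw [eq_div_iff hS.ne']
      linarith [he0]
    rw [heval, hγ']
    have h1 : S / D * (D / S) = 1 := by field_simp
    rw [h1]
  · -- lower bound
    rintro x ⟨g, w, hw, rfl⟩
    have hge : D / S ≤ e g := by
      rw [div_le_iff₀ hS]
      have := key g
      nlinarith [Complex.normSq_nonneg ((S : ℂ) * g - (starRingEnd ℂ) c)]
    have hlog : Real.log (w * (D / S)) ≤ w * (D / S) - 1 :=
      Real.log_le_sub_one_of_pos (by positivity)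
    rw [Real.log_mul hw.ne' (by positivity)] at hlog
    have hlogdiv : Real.log (D / S) = - Real.log (S / D) := by
      rw [← Real.log_inv]
      congr 1
      field_simp
    rw [hγ']
    have hwe : w * (D / S) ≤ w * e g := by
      apply mul_le_mul_of_nonneg_left hge hw.le
    nlinarith [hlog, hwe, hlogdiv]
end

section
/- Let A ∈ ℂ^(L×L) be Hermitian positive semidefinite and B ∈ ℂ^(L×K). For λ > 0 define V(λ) = (A + λI)⁻¹B and P(λ) = Tr(V(λ)V(λ)ᴴ) = ‖(A+λI)⁻¹B‖_F². Then P is monotonically nonincreasing on (0,∞). -/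
open Matrix
open scoped ComplexOrder

/-!
Diagonalize `A = U diag(d) Uᴴ` with `U` unitary and `d ≥ 0`. Then
`(A + λI)⁻¹ = U diag((d + λ)⁻¹) Uᴴ`, and since the trace of `X Xᴴ` is unchanged by a unitary
left factor, `P(λ) = ∑ᵢⱼ |(Uᴴ B)ᵢⱼ|² / (dᵢ + λ)²`, a sum of nonincreasing functions of `λ > 0`.
-/

namespace Matrix

variable {n m 𝕜 : Type*} [RCLike 𝕜] [Fintype n] [Fintype m]

lemma re_trace_mul_conjTranspose_self (X : Matrix n m 𝕜) :
    RCLike.re (X * Xᴴ).trace = ∑ i, ∑ j, ‖X i j‖ ^ 2 := by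
  simp only [trace, diag_apply, mul_apply, conjTranspose_apply, map_sum, RCLike.star_def,
    RCLike.mul_conj, ← RCLike.ofReal_pow, RCLike.ofReal_re]

variable [DecidableEq n]

lemma trace_unitary_mul_mul_conjTranspose_self {U : Matrix n n 𝕜} (hU : U ∈ unitaryGroup n 𝕜)
    (Y : Matrix n m 𝕜) : ((U * Y) * (U * Y)ᴴ).trace = (Y * Yᴴ).trace := by
  rw [conjTranspose_mul, ← Matrix.mul_assoc, Matrix.mul_assoc U, trace_mul_cycle,
    ← star_eq_conjTranspose, mem_unitaryGroup_iff'.mp hU, Matrix.one_mul]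

namespace IsHermitian

variable {A : Matrix n n 𝕜} (hA : A.IsHermitian)

lemma add_smul_one_eq_conjStarAlgAut (c : ℝ) :
    A + c • 1 = Unitary.conjStarAlgAut 𝕜 _ hA.eigenvectorUnitary
      (diagonal fun i ↦ ((hA.eigenvalues i + c : ℝ) : 𝕜)) := by
  have hsmul : (c • 1 : Matrix n n 𝕜) =
      Unitary.conjStarAlgAut 𝕜 _ hA.eigenvectorUnitary (c • 1) := by
    rw [LinearMapClass.map_smul_of_tower, map_one]
  conv_lhs => rw [hA.spectral_theorem, hsmul, ← map_add]
  congr 1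
  ext i j
  rcases eq_or_ne i j with rfl | h
  · simp only [add_apply, diagonal_apply_eq, Function.comp_apply, smul_apply, one_apply_eq]
    rw [RCLike.real_smul_eq_coe_mul, mul_one, RCLike.ofReal_add]
  · simp [h]

lemma inv_add_smul_one_eq_conjStarAlgAut {c : ℝ} (hc : ∀ i, hA.eigenvalues i + c ≠ 0) :
    (A + c • 1)⁻¹ = Unitary.conjStarAlgAut 𝕜 _ hA.eigenvectorUnitary
      (diagonal fun i ↦ (((hA.eigenvalues i + c)⁻¹ : ℝ) : 𝕜)) := by
  refine inv_eq_left_inv ?_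
  rw [hA.add_smul_one_eq_conjStarAlgAut, ← map_mul, diagonal_mul_diagonal, ← map_one
    (Unitary.conjStarAlgAut 𝕜 _ hA.eigenvectorUnitary), ← diagonal_one]
  congr 2 with i
  rw [← RCLike.ofReal_mul, inv_mul_cancel₀ (hc i), RCLike.ofReal_one]

lemma re_trace_inv_add_smul_one_mul_self {c : ℝ} (hc : ∀ i, hA.eigenvalues i + c ≠ 0)
    (B : Matrix n m 𝕜) :
    RCLike.re (((A + c • 1)⁻¹ * B) * ((A + c • 1)⁻¹ * B)ᴴ).trace =
      ∑ i, ∑ j, ‖(star (hA.eigenvectorUnitary : Matrix n n 𝕜) * B) i j‖ ^ 2 /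
        (hA.eigenvalues i + c) ^ 2 := by
  rw [hA.inv_add_smul_one_eq_conjStarAlgAut hc, Unitary.conjStarAlgAut_apply,
    Matrix.mul_assoc (_ * diagonal _), Matrix.mul_assoc _ (diagonal _),
    trace_unitary_mul_mul_conjTranspose_self hA.eigenvectorUnitary.2,
    re_trace_mul_conjTranspose_self]
  simp only [diagonal_mul, norm_mul, RCLike.norm_ofReal, mul_pow, sq_abs, inv_pow,
    div_eq_inv_mul]

end IsHermitian

lemma PosSemidef.antitoneOn_re_trace_inv_add_smul_one_mul_self {A : Matrix n n 𝕜}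
    (hA : A.PosSemidef) (B : Matrix n m 𝕜) :
    AntitoneOn (fun c : ℝ ↦ RCLike.re (((A + c • 1)⁻¹ * B) * ((A + c • 1)⁻¹ * B)ᴴ).trace)
      (Set.Ioi 0) := by
  intro a (ha : 0 < a) b (hb : 0 < b) hab
  have hpos {c : ℝ} (hc : 0 < c) i : 0 < hA.1.eigenvalues i + c :=
    add_pos_of_nonneg_of_pos (hA.eigenvalues_nonneg i) hc
  simp only [hA.1.re_trace_inv_add_smul_one_mul_self fun i ↦ (hpos ha i).ne',
    hA.1.re_trace_inv_add_smul_one_mul_self fun i ↦ (hpos hb i).ne']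
  gcongr with i _ j _
  · exact pow_pos (hpos ha i) 2
  · exact (hpos ha i).le

end Matrix

theorem precoder_power_antitone (L K : ℕ)
    (A : Matrix (Fin L) (Fin L) ℂ) (hA : A.PosSemidef)
    (B : Matrix (Fin L) (Fin K) ℂ)
    (P : ℝ → ℝ)
    (hP : ∀ lam : ℝ, P lam = (Matrix.trace
      (((A + lam • (1 : Matrix (Fin L) (Fin L) ℂ))⁻¹ * B) *
       ((A + lam • (1 : Matrix (Fin L) (Fin L) ℂ))⁻¹ * B)ᴴ)).re) :
    AntitoneOn P (Set.Ioi (0:ℝ)) := by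
  rw [funext hP]
  exact hA.antitoneOn_re_trace_inv_add_smul_one_mul_self B
end
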